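/- arXiv:2006.13700 — 4 statements merged into one kernel-verified Lean document; each statement's English description precedes it below -/
import Mathlib

section
/- Let m, n be positive integers, π ∈ ℝ^m a probability vector, and q ∈ [0,1]^m. Define the joint probability mass function p(x,y) = Mult(n,π)(x) · ∏_{j=1}^m C(x^{(j)}, y^{(j)}) (q^{(j)})^{y^{(j)}} (1−q^{(j)})^{x^{(j)}−y^{(j)}} for x ∈ S_{m,n} and y ∈ ℕ^m with y ≤ x componentwise (and 0 otherwise). Then for every y ∈ ℕ^m with ∑_j y^{(j)} ≤ n, the marginal mass function satisfies: ∑_{x ∈ S_{m,n}} p(x,y) = n! · ( ∏_{j=1}^m (π^{(j)} q^{(j)})^{y^{(j)}} / y^{(j)}! ) · (1 − πᵀq)^{n − ∑_j y^{(j)}} / (n − ∑_j y^{(j)})! (with the convention 0^0 = 1). -/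
open Finset

/-- The multinomial probability mass function `Mult(n, π)` evaluated at `x ∈ S_{m,n}`. -/
noncomputable def mult {m : ℕ} (n : ℕ) (π : Fin m → ℝ) (x : Fin m → ℕ) : ℝ :=
  (Nat.factorial n : ℝ) * ∏ i, π i ^ x i / (Nat.factorial (x i) : ℝ)

/-- `S_{m,n}`: the (finite) set of vectors `x : Fin m → ℕ` with `∑ i, x i = n`. -/
def vecSet (m n : ℕ) : Finset (Fin m → ℕ) :=
  (Fintype.piFinset fun _ : Fin m => Finset.range (n + 1)).filter fun x => ∑ i, x i = n

/-- The joint probability mass function `p(x, y)`: `x ∼ Mult(n, π)` and, given `x`, the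
entries of `y` are conditionally independent with `y⁽ʲ⁾ ∼ Bin(x⁽ʲ⁾, q⁽ʲ⁾)`. -/
noncomputable def jointP {m : ℕ} (n : ℕ) (π q : Fin m → ℝ) (x y : Fin m → ℕ) : ℝ :=
  if ∀ j, y j ≤ x j then
    mult n π x *
      ∏ j, ((x j).choose (y j) : ℝ) * q j ^ y j * (1 - q j) ^ (x j - y j)
  else 0

lemma mem_vecSet {m N : ℕ} {x : Fin m → ℕ} : x ∈ vecSet m N ↔ ∑ i, x i = N := by
  simp only [vecSet, Finset.mem_filter, Fintype.mem_piFinset, Finset.mem_range, Nat.lt_succ_iff]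
  constructor
  · exact fun h => h.2
  · intro h
    exact ⟨fun i => h ▸ Finset.single_le_sum (fun _ _ => Nat.zero_le _) (Finset.mem_univ i), h⟩

lemma vecSet_eq (m N : ℕ) : vecSet m N = Finset.piAntidiag Finset.univ N := by
  ext x
  rw [mem_vecSet, Finset.mem_piAntidiag]
  simp

lemma sum_prod_pow_div (m N : ℕ) (a : Fin m → ℝ) :
    ∑ x ∈ vecSet m N, ∏ j, a j ^ x j / (Nat.factorial (x j) : ℝ)
      = (∑ j, a j) ^ N / (Nat.factorial N : ℝ) := by
  rw [vecSet_eq, eq_div_iff (by positivity : (Nat.factorial N : ℝ) ≠ 0),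
    Finset.sum_pow_eq_sum_piAntidiag, Finset.sum_mul]
  apply Finset.sum_congr rfl
  intro x hx
  rw [Finset.mem_piAntidiag] at hx
  have hsum : ∑ i, x i = N := hx.1
  have hspec := Nat.multinomial_spec Finset.univ x
  rw [hsum] at hspec
  have hspecR : (∏ i, (Nat.factorial (x i) : ℝ)) * (Nat.multinomial Finset.univ x : ℝ)
      = (Nat.factorial N : ℝ) := by
    exact_mod_cast congrArg (Nat.cast : ℕ → ℝ) hspec
  have hfac : (∏ i, (Nat.factorial (x i) : ℝ)) ≠ 0 := by positivity
  rw [Finset.prod_div_distrib]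
  field_simp
  rw [← hspecR]
  ring

/-- The marginal mass function of `y`:
`p(y) = n! (∏ⱼ (πⱼqⱼ)^{yⱼ}/yⱼ!) (1−πᵀq)^{n−1ᵀy}/(n−1ᵀy)!`. -/
theorem statement3 (m n : ℕ) (hm : 0 < m) (hn : 0 < n)
    (π : Fin m → ℝ) (hπ0 : ∀ i, 0 ≤ π i) (hπ1 : ∑ i, π i = 1)
    (q : Fin m → ℝ) (hq0 : ∀ i, 0 ≤ q i) (hq1 : ∀ i, q i ≤ 1)
    (y : Fin m → ℕ) (hy : ∑ i, y i ≤ n) :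
    ∑ x ∈ vecSet m n, jointP n π q x y
      = (Nat.factorial n : ℝ) *
          (∏ j, (π j * q j) ^ y j / (Nat.factorial (y j) : ℝ)) *
          (1 - ∑ i, π i * q i) ^ (n - ∑ j, y j) /
          (Nat.factorial (n - ∑ j, y j) : ℝ) := by
  classical
  set s := ∑ j, y j with hs
  -- restrict to x ≥ y
  have step1 : ∑ x ∈ vecSet m n, jointP n π q x y
      = ∑ x ∈ (vecSet m n).filter (fun x => ∀ j, y j ≤ x j), jointP n π q x y := by
    rw [Finset.sum_filter]
    apply Finset.sum_congr rfl
    intro x _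
    by_cases h : ∀ j, y j ≤ x j
    · simp [h]
    · simp [jointP, h]
  rw [step1]
  -- reindex by z = x - y
  have step2 : ∑ x ∈ (vecSet m n).filter (fun x => ∀ j, y j ≤ x j), jointP n π q x y
      = ∑ z ∈ vecSet m (n - s), jointP n π q (fun j => y j + z j) y := by
    apply Finset.sum_nbij' (fun x => fun j => x j - y j) (fun z => fun j => y j + z j)
    · intro x hx
      rw [Finset.mem_filter, mem_vecSet] at hx
      rw [mem_vecSet]
      have : ∑ j, (x j - y j) + ∑ j, y j = ∑ j, x j := by
        rw [← Finset.sum_add_distrib]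
        exact Finset.sum_congr rfl fun j _ => Nat.sub_add_cancel (hx.2 j)
      omega
    · intro z hz
      rw [mem_vecSet] at hz
      rw [Finset.mem_filter, mem_vecSet]
      refine ⟨?_, fun j => Nat.le_add_right _ _⟩
      rw [Finset.sum_add_distrib, hz, ← hs]
      omega
    · intro x hx
      rw [Finset.mem_filter] at hx
      funext j
      exact Nat.add_sub_cancel' (hx.2 j)
    · intro z _
      funext j
      exact Nat.add_sub_cancel_left _ _
    · intro x hx
      rw [Finset.mem_filter] at hx
      congr 1
      funext j
      exact (Nat.add_sub_cancel' (hx.2 j)).symm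
  rw [step2]
  -- evaluate summands
  have step3 : ∀ z : Fin m → ℕ, jointP n π q (fun j => y j + z j) y
      = ((Nat.factorial n : ℝ) * ∏ j, (π j * q j) ^ y j / (Nat.factorial (y j) : ℝ)) *
        ∏ j, (π j * (1 - q j)) ^ z j / (Nat.factorial (z j) : ℝ) := by
    intro z
    have hle : ∀ j, y j ≤ y j + z j := fun j => Nat.le_add_right _ _
    rw [jointP, if_pos hle, mult, mul_assoc, mul_assoc, ← Finset.prod_mul_distrib,
      ← Finset.prod_mul_distrib]
    congr 1
    apply Finset.prod_congr rfl
    intro j _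
    have hy0 : (Nat.factorial (y j) : ℝ) ≠ 0 := by positivity
    have hz0 : (Nat.factorial (z j) : ℝ) ≠ 0 := by positivity
    have hchoose : ((y j + z j).choose (y j) : ℝ)
        = (Nat.factorial (y j + z j) : ℝ) /
          ((Nat.factorial (y j) : ℝ) * (Nat.factorial (z j) : ℝ)) := by
      rw [Nat.cast_choose ℝ (hle j), Nat.add_sub_cancel_left]
    rw [Nat.add_sub_cancel_left, hchoose, pow_add, mul_pow, mul_pow]
    have hyz0 : (Nat.factorial (y j + z j) : ℝ) ≠ 0 := by positivity
    field_simp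
  rw [Finset.sum_congr rfl (fun z _ => step3 z), ← Finset.mul_sum, sum_prod_pow_div]
  have hkey : ∑ j, π j * (1 - q j) = 1 - ∑ i, π i * q i := by
    have : ∑ j, π j * (1 - q j) = (∑ j, π j) - ∑ j, π j * q j := by
      rw [← Finset.sum_sub_distrib]
      apply Finset.sum_congr rfl
      intro j _; ring
    rw [this, hπ1]
  rw [hkey]
  ring
end

section
/- Let m, n be positive integers, let P be an m×m matrix with nonnegative entries summing to 1, and let Q be an m×m matrix with entries in [0,1] such that ∑_{i,j} P^{(i,j)} Q^{(i,j)} < 1. Define the joint probability mass function p(Z,Y) = Mult(n,P)(Z) · ∏_{i,j=1}^m C(Z^{(i,j)}, Y^{(i,j)}) (Q^{(i,j)})^{Y^{(i,j)}} (1−Q^{(i,j)})^{Z^{(i,j)}−Y^{(i,j)}} for m×m nonnegative-integer matrices Z with total sum n and Y ≤ Z entrywise (and 0 otherwise), and let p(Y) = ∑_Z p(Z,Y). Then for every Y with ∑_{i,j} Y^{(i,j)} ≤ n and every pair (i,j): ∑_Z Z^{(i,j)} p(Z,Y) = p(Y) · [ Y^{(i,j)} + (n − ∑_{k,l} Y^{(k,l)})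 · P^{(i,j)}(1−Q^{(i,j)}) / (1 − ∑_{k,l} P^{(k,l)} Q^{(k,l)}) ]. That is, the conditional mean of Z given Y equals Y + (n − 1ᵀY1) · P∘(1−Q)/(1 − 1ᵀ(P∘Q)1). -/
open Finset

/-- The matrix multinomial probability mass function `Mult(n, P)` at a matrix `Z` with
total entry sum `n`. -/
noncomputable def matMult {m : ℕ} (n : ℕ) (P : Fin m → Fin m → ℝ)
    (Z : Fin m → Fin m → ℕ) : ℝ :=
  (Nat.factorial n : ℝ) * ∏ i, ∏ j, P i j ^ Z i j / (Nat.factorial (Z i j) : ℝ)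

/-- The (finite) set of `m×m` matrices with nonnegative integer entries and total sum `n`. -/
def matSet (m n : ℕ) : Finset (Fin m → Fin m → ℕ) :=
  (Fintype.piFinset fun _ : Fin m => Fintype.piFinset fun _ : Fin m =>
      Finset.range (n + 1)).filter fun Z => ∑ i, ∑ j, Z i j = n


lemma mem_matSet {m n : ℕ} {Z : Fin m → Fin m → ℕ} :
    Z ∈ matSet m n ↔ ∑ i, ∑ j, Z i j = n := by
  constructor
  · exact fun h => (Finset.mem_filter.mp h).2
  · intro h
    refine Finset.mem_filter.mpr ⟨?_, h⟩
    refine Fintype.mem_piFinset.mpr fun i => Fintype.mem_piFinset.mpr fun j => ?_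
    rw [Finset.mem_range, Nat.lt_succ_iff]
    calc Z i j ≤ ∑ j', Z i j' :=
          Finset.single_le_sum (fun _ _ => Nat.zero_le _) (mem_univ j)
    _ ≤ ∑ i', ∑ j', Z i' j' :=
          Finset.single_le_sum (f := fun i' => ∑ j', Z i' j')
            (fun _ _ => Nat.zero_le _) (mem_univ i)
    _ = n := h

/-- extract one factor of a double product -/
lemma prod_prod_erase {m : ℕ} (f : Fin m → Fin m → ℝ) (i j : Fin m) :
    ∏ k, ∏ l, f k l = f i j * ∏ p ∈ (univ ×ˢ univ : Finset (Fin m × Fin m)).erase (i, j), f p.1 p.2 := by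
  rw [← Finset.prod_product']
  exact (Finset.mul_prod_erase _ (fun p : Fin m × Fin m => f p.1 p.2) (by simp : ((i,j) : Fin m × Fin m) ∈ univ ×ˢ univ)).symm

def addE {m : ℕ} (i j : Fin m) (V : Fin m → Fin m → ℕ) : Fin m → Fin m → ℕ :=
  fun k l => V k l + if k = i ∧ l = j then 1 else 0

def subE {m : ℕ} (i j : Fin m) (W : Fin m → Fin m → ℕ) : Fin m → Fin m → ℕ :=
  fun k l => W k l - if k = i ∧ l = j then 1 else 0

lemma sum_addE {m : ℕ} (i j : Fin m) (V : Fin m → Fin m → ℕ) :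
    ∑ k, ∑ l, addE i j V k l = (∑ k, ∑ l, V k l) + 1 := by
  simp [addE, Finset.sum_add_distrib, ite_and]

lemma addE_subE {m : ℕ} (i j : Fin m) (W : Fin m → Fin m → ℕ) (h : W i j ≠ 0) :
    addE i j (subE i j W) = W := by
  funext k l
  simp only [addE, subE]
  by_cases hk : k = i ∧ l = j
  · obtain ⟨rfl, rfl⟩ := hk; simp; omega
  · simp [hk]

lemma subE_addE {m : ℕ} (i j : Fin m) (V : Fin m → Fin m → ℕ) :
    subE i j (addE i j V) = V := by
  funext k l
  simp only [addE, subE]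
  by_cases hk : k = i ∧ l = j <;> simp [hk]

lemma shift_sum {m : ℕ} (A : Fin m → Fin m → ℝ) (N : ℕ) (i j : Fin m) :
    ∑ W ∈ matSet m (N+1), (W i j : ℝ) * ∏ k, ∏ l, A k l ^ W k l / (W k l).factorial
    = A i j * ∑ V ∈ matSet m N, ∏ k, ∏ l, A k l ^ V k l / (V k l).factorial := by
  rw [Finset.mul_sum]
  rw [← Finset.sum_filter_of_ne (p := fun W => W i j ≠ 0)
      (fun W _ hW => by intro h0; apply hW; simp [h0])]
  refine Finset.sum_nbij' (subE i j) (addE i j) ?_ ?_ ?_ ?_ ?_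
  · intro W hW
    obtain ⟨hW1, hW2⟩ := Finset.mem_filter.mp hW
    rw [mem_matSet]
    have := sum_addE i j (subE i j W)
    rw [addE_subE i j W hW2] at this
    have h1 := (mem_matSet.mp hW1)
    omega
  · intro V hV
    refine Finset.mem_filter.mpr ⟨mem_matSet.mpr ?_, ?_⟩
    · rw [sum_addE, mem_matSet.mp hV]
    · simp [addE]
  · intro W hW
    exact addE_subE i j W (Finset.mem_filter.mp hW).2
  · intro V _
    exact subE_addE i j V
  · intro W hW
    obtain ⟨_, hW2⟩ := Finset.mem_filter.mp hW
    rw [prod_prod_erase (fun k l => A k l ^ W k l / (W k l).factorial) i j,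
        prod_prod_erase (fun k l => A k l ^ (subE i j W) k l / ((subE i j W) k l).factorial) i j]
    have hoff : ∀ p ∈ (univ ×ˢ univ : Finset (Fin m × Fin m)).erase (i, j),
        A p.1 p.2 ^ (subE i j W) p.1 p.2 / ((subE i j W) p.1 p.2).factorial
        = A p.1 p.2 ^ W p.1 p.2 / (W p.1 p.2).factorial := by
      intro p hp
      have hne : p ≠ (i, j) := Finset.ne_of_mem_erase hp
      have : ¬(p.1 = i ∧ p.2 = j) := by
        intro ⟨h1, h2⟩; exact hne (Prod.ext h1 h2)
      simp [subE, this]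
    rw [Finset.prod_congr rfl hoff]
    obtain ⟨w, hw⟩ := Nat.exists_eq_succ_of_ne_zero hW2
    have hsub : subE i j W i j = w := by simp [subE, hw]
    rw [hsub, hw]
    have hfac : ((w+1).factorial : ℝ) ≠ 0 := Nat.cast_ne_zero.mpr (Nat.factorial_ne_zero _)
    have hfac' : ((w).factorial : ℝ) ≠ 0 := Nat.cast_ne_zero.mpr (Nat.factorial_ne_zero _)
    rw [Nat.factorial_succ]
    push_cast
    field_simp
    rw [Nat.succ_eq_add_one]; ring

/-- The joint probability mass function `p(Z, Y)`: `Z ∼ Mult(n, P)` and, given `Z`, the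
entries of `Y` are conditionally independent with `Y⁽ⁱʲ⁾ ∼ Bin(Z⁽ⁱʲ⁾, Q⁽ⁱʲ⁾)`. -/
noncomputable def jointPM {m : ℕ} (n : ℕ) (P Q : Fin m → Fin m → ℝ)
    (Z Y : Fin m → Fin m → ℕ) : ℝ :=
  if ∀ i j, Y i j ≤ Z i j then
    matMult n P Z *
      ∏ i, ∏ j, ((Z i j).choose (Y i j) : ℝ) * Q i j ^ Y i j *
        (1 - Q i j) ^ (Z i j - Y i j)
  else 0


lemma entry_eq (p q : ℝ) (a b : ℕ) :
    p ^ (a + b) / ((a+b).factorial : ℝ) * (((a+b).choose a : ℝ) * q ^ a * (1-q) ^ (a + b - a))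
    = (p * q) ^ a / (a.factorial : ℝ) * ((p * (1-q)) ^ b / (b.factorial : ℝ)) := by
  rw [Nat.add_sub_cancel_left, Nat.cast_choose ℝ (Nat.le_add_right a b),
    Nat.add_sub_cancel_left, pow_add, mul_pow, mul_pow]
  have h1 : ((a+b).factorial : ℝ) ≠ 0 := Nat.cast_ne_zero.mpr (Nat.factorial_ne_zero _)
  have h2 : ((a).factorial : ℝ) ≠ 0 := Nat.cast_ne_zero.mpr (Nat.factorial_ne_zero _)
  have h3 : ((b).factorial : ℝ) ≠ 0 := Nat.cast_ne_zero.mpr (Nat.factorial_ne_zero _)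
  field_simp

lemma jointPM_add {m n : ℕ} (P Q : Fin m → Fin m → ℝ) (Y W : Fin m → Fin m → ℕ) :
    jointPM n P Q (fun k l => Y k l + W k l) Y
    = ((n.factorial : ℝ) * ∏ k, ∏ l, (P k l * Q k l) ^ Y k l / ((Y k l).factorial : ℝ))
      * ∏ k, ∏ l, (P k l * (1 - Q k l)) ^ W k l / ((W k l).factorial : ℝ) := by
  rw [jointPM, if_pos (fun i j => Nat.le_add_right _ _), matMult]
  rw [mul_assoc, ← Finset.prod_mul_distrib]
  rw [mul_assoc, ← Finset.prod_mul_distrib]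
  congr 1
  refine Finset.prod_congr rfl fun k _ => ?_
  rw [← Finset.prod_mul_distrib, ← Finset.prod_mul_distrib]
  exact Finset.prod_congr rfl fun l _ => entry_eq (P k l) (Q k l) (Y k l) (W k l)

lemma sum_reindex {m n : ℕ} (Y : Fin m → Fin m → ℕ) (hY : ∑ i, ∑ j, Y i j ≤ n)
    (f : (Fin m → Fin m → ℕ) → ℝ)
    (hf : ∀ Z, ¬(∀ i j, Y i j ≤ Z i j) → f Z = 0) :
    ∑ Z ∈ matSet m n, f Z
    = ∑ W ∈ matSet m (n - ∑ i, ∑ j, Y i j), f (fun k l => Y k l + W k l) := by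
  rw [← Finset.sum_filter_of_ne (p := fun Z => ∀ i j, Y i j ≤ Z i j)
      (fun Z _ hZ => by by_contra h; exact hZ (hf Z h))]
  refine Finset.sum_nbij' (fun Z => fun k l => Z k l - Y k l)
    (fun W => fun k l => Y k l + W k l) ?_ ?_ ?_ ?_ ?_
  · intro Z hZ
    obtain ⟨hZ1, hZ2⟩ := Finset.mem_filter.mp hZ
    rw [mem_matSet]
    show ∑ k, ∑ l, (Z k l - Y k l) = n - ∑ i, ∑ j, Y i j
    have h1 := mem_matSet.mp hZ1
    have h2 : ∑ k, ∑ l, (Z k l - Y k l + Y k l) = n := by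
      rw [← h1]
      exact Finset.sum_congr rfl fun k _ => Finset.sum_congr rfl fun l _ => by
        have := hZ2 k l; omega
    simp only [Finset.sum_add_distrib] at h2
    omega
  · intro W hW
    refine Finset.mem_filter.mpr ⟨mem_matSet.mpr ?_, fun k l => Nat.le_add_right _ _⟩
    show ∑ k, ∑ l, (Y k l + W k l) = n
    have h1 := mem_matSet.mp hW
    simp only [Finset.sum_add_distrib, h1]
    omega
  · intro Z hZ
    obtain ⟨_, hZ2⟩ := Finset.mem_filter.mp hZ
    funext k l
    show Y k l + (Z k l - Y k l) = Z k l
    have := hZ2 k l; omega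
  · intro W _
    funext k l
    show Y k l + W k l - Y k l = W k l
    omega
  · intro Z hZ
    obtain ⟨_, hZ2⟩ := Finset.mem_filter.mp hZ
    have hfun : (fun k l => Y k l + (Z k l - Y k l)) = Z := by
      funext k l; have := hZ2 k l; omega
    show f Z = f (fun k l => Y k l + (Z k l - Y k l))
    rw [hfun]

noncomputable def Ssum (m M : ℕ) (A : Fin m → Fin m → ℝ) : ℝ :=
  ∑ V ∈ matSet m M, ∏ k, ∏ l, A k l ^ V k l / ((V k l).factorial : ℝ)

lemma shift_sum' {m : ℕ} (A : Fin m → Fin m → ℝ) (N : ℕ) (i j : Fin m) :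
    ∑ W ∈ matSet m (N+1), (W i j : ℝ) * ∏ k, ∏ l, A k l ^ W k l / ((W k l).factorial : ℝ)
    = A i j * Ssum m N A := shift_sum A N i j

lemma Ssum_rec {m : ℕ} (A : Fin m → Fin m → ℝ) (N : ℕ) :
    (∑ k, ∑ l, A k l) * Ssum m N A = ((N : ℝ) + 1) * Ssum m (N + 1) A := by
  have h1 : (∑ k, ∑ l, A k l) * Ssum m N A = ∑ k, ∑ l, (A k l * Ssum m N A) := by
    simp [Finset.sum_mul]
  rw [h1]
  have h2 : ∀ k l : Fin m, A k l * Ssum m N A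
      = ∑ W ∈ matSet m (N+1), (W k l : ℝ) * ∏ a, ∏ b, A a b ^ W a b / ((W a b).factorial : ℝ) :=
    fun k l => (shift_sum' A N k l).symm
  calc ∑ k, ∑ l, (A k l * Ssum m N A)
      = ∑ k, ∑ l, ∑ W ∈ matSet m (N+1), (W k l : ℝ)
          * ∏ a, ∏ b, A a b ^ W a b / ((W a b).factorial : ℝ) := by
        exact Finset.sum_congr rfl fun k _ => Finset.sum_congr rfl fun l _ => h2 k l
    _ = ∑ W ∈ matSet m (N+1), ∑ k, ∑ l, (W k l : ℝ)
          * ∏ a, ∏ b, A a b ^ W a b / ((W a b).factorial : ℝ) := by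
        rw [Finset.sum_congr rfl fun (k : Fin m) (_ : k ∈ univ) =>
          (Finset.sum_comm (s := (univ : Finset (Fin m))) (t := matSet m (N+1))
            (f := fun l W => (W k l : ℝ) * ∏ a, ∏ b, A a b ^ W a b / ((W a b).factorial : ℝ)))]
        exact Finset.sum_comm
    _ = ∑ W ∈ matSet m (N+1), ((N : ℝ) + 1)
          * ∏ a, ∏ b, A a b ^ W a b / ((W a b).factorial : ℝ) := by
        refine Finset.sum_congr rfl fun W hW => ?_
        have hWs : ∑ k, ∑ l, W k l = N + 1 := mem_matSet.mp hW
        have hcast : ∑ k, ∑ l, (W k l : ℝ) = (N : ℝ) + 1 := by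
          have := congrArg (Nat.cast : ℕ → ℝ) hWs
          push_cast at this
          exact this
        calc ∑ k, ∑ l, ((W k l : ℝ)
              * ∏ a, ∏ b, A a b ^ W a b / ((W a b).factorial : ℝ))
            = (∑ k, ∑ l, (W k l : ℝ))
              * ∏ a, ∏ b, A a b ^ W a b / ((W a b).factorial : ℝ) := by
              simp [Finset.sum_mul]
          _ = ((N : ℝ) + 1) * ∏ a, ∏ b, A a b ^ W a b / ((W a b).factorial : ℝ) := by
              rw [hcast]
    _ = ((N : ℝ) + 1) * Ssum m (N + 1) A := by rw [← Finset.mul_sum]; rfl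

/-- The conditional mean of `Z` given `Y` equals
`Y + (n − 1ᵀY1)·P∘(1−Q)/(1 − 1ᵀ(P∘Q)1)`. -/
theorem statement6 (m n : ℕ) (hm : 0 < m) (hn : 0 < n)
    (P : Fin m → Fin m → ℝ) (hP0 : ∀ i j, 0 ≤ P i j) (hP1 : ∑ i, ∑ j, P i j = 1)
    (Q : Fin m → Fin m → ℝ) (hQ0 : ∀ i j, 0 ≤ Q i j) (hQ1 : ∀ i j, Q i j ≤ 1)
    (hPQ : ∑ i, ∑ j, P i j * Q i j < 1)
    (Y : Fin m → Fin m → ℕ) (hY : ∑ i, ∑ j, Y i j ≤ n) (i j : Fin m) :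
    ∑ Z ∈ matSet m n, (Z i j : ℝ) * jointPM n P Q Z Y
      = (∑ W ∈ matSet m n, jointPM n P Q W Y) *
          ((Y i j : ℝ) + ((n : ℝ) - ∑ k, ∑ l, (Y k l : ℝ)) *
            (P i j * (1 - Q i j) / (1 - ∑ k, ∑ l, P k l * Q k l))) := by
  have hzero : ∀ Z, ¬(∀ a b, Y a b ≤ Z a b) → jointPM n P Q Z Y = 0 :=
    fun Z h => by rw [jointPM, if_neg h]
  have hcastY : ∑ k, ∑ l, (Y k l : ℝ) = ((∑ k, ∑ l, Y k l : ℕ) : ℝ) := by push_cast; rfl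
  have h1 : ∑ W ∈ matSet m n, jointPM n P Q W Y
      = ((n.factorial : ℝ) * ∏ k, ∏ l, (P k l * Q k l) ^ Y k l / ((Y k l).factorial : ℝ))
        * Ssum m (n - ∑ k, ∑ l, Y k l) (fun k l => P k l * (1 - Q k l)) := by
    rw [sum_reindex Y hY _ hzero, Ssum, Finset.mul_sum]
    exact Finset.sum_congr rfl fun W _ => jointPM_add P Q Y W
  have h2 : ∑ Z ∈ matSet m n, (Z i j : ℝ) * jointPM n P Q Z Y
      = ((n.factorial : ℝ) * ∏ k, ∏ l, (P k l * Q k l) ^ Y k l / ((Y k l).factorial : ℝ))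
        * ((Y i j : ℝ) * Ssum m (n - ∑ k, ∑ l, Y k l) (fun k l => P k l * (1 - Q k l))
          + ∑ W ∈ matSet m (n - ∑ k, ∑ l, Y k l), (W i j : ℝ)
            * ∏ k, ∏ l, (P k l * (1 - Q k l)) ^ W k l / ((W k l).factorial : ℝ)) := by
    have hzero' : ∀ Z, ¬(∀ a b, Y a b ≤ Z a b) → (Z i j : ℝ) * jointPM n P Q Z Y = 0 :=
      fun Z h => by rw [hzero Z h, mul_zero]
    rw [sum_reindex Y hY (fun Z => (Z i j : ℝ) * jointPM n P Q Z Y) hzero',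
      mul_add, ← mul_assoc]
    have e : ∀ W ∈ matSet m (n - ∑ k, ∑ l, Y k l),
        ((fun k l => Y k l + W k l) i j : ℝ) * jointPM n P Q (fun k l => Y k l + W k l) Y
        = (((n.factorial : ℝ) * ∏ k, ∏ l, (P k l * Q k l) ^ Y k l / ((Y k l).factorial : ℝ))
            * (Y i j : ℝ))
            * (∏ k, ∏ l, (P k l * (1 - Q k l)) ^ W k l / ((W k l).factorial : ℝ))
          + ((n.factorial : ℝ) * ∏ k, ∏ l, (P k l * Q k l) ^ Y k l / ((Y k l).factorial : ℝ))
            * ((W i j : ℝ)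
              * ∏ k, ∏ l, (P k l * (1 - Q k l)) ^ W k l / ((W k l).factorial : ℝ)) := by
      intro W _
      show ((Y i j + W i j : ℕ) : ℝ) * jointPM n P Q (fun k l => Y k l + W k l) Y = _
      rw [jointPM_add P Q Y W]
      push_cast
      ring
    rw [Finset.sum_congr rfl e, Finset.sum_add_distrib, ← Finset.mul_sum, ← Finset.mul_sum]
    rfl
  rw [h1, h2]
  set c := (n.factorial : ℝ) * ∏ k, ∏ l, (P k l * Q k l) ^ Y k l / ((Y k l).factorial : ℝ)
    with hc
  have ht1 : (1 : ℝ) - ∑ k, ∑ l, P k l * Q k l ≠ 0 := by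
    have : (0:ℝ) < 1 - ∑ k, ∑ l, P k l * Q k l := by linarith
    linarith
  by_cases hN : n - ∑ k, ∑ l, Y k l = 0
  · -- boundary case: Y sums to n
    have hsn : ∑ k, ∑ l, Y k l = n := by omega
    have hT : (∑ W ∈ matSet m (n - ∑ k, ∑ l, Y k l), (W i j : ℝ)
        * ∏ k, ∏ l, (P k l * (1 - Q k l)) ^ W k l / ((W k l).factorial : ℝ)) = 0 := by
      rw [hN]
      refine Finset.sum_eq_zero fun W hW => ?_
      have h0 := mem_matSet.mp hW
      have hle : W i j ≤ ∑ a, ∑ b, W a b :=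
        le_trans (Finset.single_le_sum (fun _ _ => Nat.zero_le _) (mem_univ j))
          (Finset.single_le_sum (f := fun a => ∑ b, W a b)
            (fun _ _ => Nat.zero_le _) (mem_univ i))
      have : W i j = 0 := by omega
      rw [this]
      simp
    rw [hT, hcastY, hsn]
    ring
  · obtain ⟨N', hN'⟩ := Nat.exists_eq_succ_of_ne_zero hN
    have hshift := shift_sum' (fun k l => P k l * (1 - Q k l)) N' i j
    beta_reduce at hshift
    have hsumA : ∑ k, ∑ l, P k l * (1 - Q k l) = 1 - ∑ k, ∑ l, P k l * Q k l := by
      have : ∀ k l : Fin m, P k l * (1 - Q k l) = P k l - P k l * Q k l :=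
        fun k l => by ring
      simp only [this, Finset.sum_sub_distrib, hP1]
    have hrec := Ssum_rec (fun k l => P k l * (1 - Q k l)) N'
    rw [hsumA] at hrec
    have hS : Ssum m N' (fun k l => P k l * (1 - Q k l))
        = ((N' : ℝ) + 1) * Ssum m (N' + 1) (fun k l => P k l * (1 - Q k l))
          / (1 - ∑ k, ∑ l, P k l * Q k l) := by
      rw [eq_div_iff ht1]
      linear_combination hrec
    have hns : (n : ℝ) - ∑ k, ∑ l, (Y k l : ℝ) = (N' : ℝ) + 1 := by
      rw [hcastY]
      have : n = (∑ k, ∑ l, Y k l) + (N' + 1) := by omega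
      rw [this]
      push_cast
      ring
    rw [hN', hshift, hS, hns]
    field_simp
end

section
/- Let m, n be positive integers, π ∈ ℝ^m a probability vector, and K an m×m row-stochastic matrix such that (Kᵀπ)^{(i)} = ∑_j π^{(j)} K^{(j,i)} > 0 for every i. Define the m×m matrix L by L^{(i,j)} = π^{(j)} K^{(j,i)} / (Kᵀπ)^{(i)}; then L is row-stochastic. Then for all x, x' ∈ S_{m,n}: Mult(n,π)(x) · M(x, K, x') = Mult(n, Kᵀπ)(x') · M(x', L, x). Consequently, for fixed x', the function x ↦ Mult(n,π)(x) M(x,K,x') / ∑_{z ∈ S_{m,n}} Mult(n,π)(z) M(z,K,x') is the probability mass function of 1ᵀZ̃ where Z̃ is a random m×m matrix with independent rows and row i distributed Mult(x'^{(i)}, L^{(i,·)}). -/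
open Finset

/-- Matrices `Z` with nonnegative integer entries, row sums `x` and column sums `y`. -/
def transSet {m : ℕ} (x y : Fin m → ℕ) : Finset (Fin m → Fin m → ℕ) :=
  (Fintype.piFinset fun _ : Fin m => Fintype.piFinset fun _ : Fin m =>
      Finset.range (∑ i, x i + 1)).filter
    fun Z => (∀ i, ∑ j, Z i j = x i) ∧ (∀ j, ∑ i, Z i j = y j)

/-- `M(x, K, y)`: the pmf on `S_{m,n}` of the column-sum vector of a random matrix whose
rows are independent, the `i`-th row distributed `Mult(x⁽ⁱ⁾, K⁽ⁱ'⁾)`. -/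
noncomputable def kerM {m : ℕ} (K : Fin m → Fin m → ℝ) (x y : Fin m → ℕ) : ℝ :=
  ∑ Z ∈ transSet x y, ∏ i,
    (Nat.factorial (x i) : ℝ) * ∏ j, K i j ^ Z i j / (Nat.factorial (Z i j) : ℝ)

lemma mem_vecSet_iff {m k : ℕ} {v : Fin m → ℕ} : v ∈ vecSet m k ↔ ∑ i, v i = k := by
  simp only [vecSet, mem_filter, Fintype.mem_piFinset, mem_range]
  constructor
  · exact fun h => h.2
  · intro h
    refine ⟨fun i => Nat.lt_succ_of_le ?_, h⟩
    calc v i ≤ ∑ i, v i := Finset.single_le_sum (fun _ _ => Nat.zero_le _) (mem_univ i)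
    _ = k := h

lemma mem_transSet_iff {m : ℕ} {x y : Fin m → ℕ} {Z : Fin m → Fin m → ℕ} :
    Z ∈ transSet x y ↔ (∀ i, ∑ j, Z i j = x i) ∧ (∀ j, ∑ i, Z i j = y j) := by
  simp only [transSet, mem_filter, Fintype.mem_piFinset, mem_range]
  constructor
  · exact fun h => h.2
  · intro h
    refine ⟨fun i j => Nat.lt_succ_of_le ?_, h⟩
    calc Z i j ≤ ∑ j, Z i j := Finset.single_le_sum (fun _ _ => Nat.zero_le _) (mem_univ j)
    _ = x i := h.1 i
    _ ≤ ∑ i, x i := Finset.single_le_sum (fun _ _ => Nat.zero_le _) (mem_univ i)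

lemma vecSet_eq_piAntidiag (m k : ℕ) : vecSet m k = Finset.piAntidiag univ k := by
  ext v
  simp [mem_vecSet_iff, Finset.mem_piAntidiag]

/-- The multinomial pmf sums to 1. -/
lemma mult_sum_one {m : ℕ} (k : ℕ) (p : Fin m → ℝ) (hp1 : ∑ i, p i = 1) :
    ∑ v ∈ vecSet m k, mult k p v = 1 := by
  rw [vecSet_eq_piAntidiag]
  have h := Finset.sum_pow_eq_sum_piAntidiag (univ : Finset (Fin m)) p k
  rw [hp1, one_pow] at h
  rw [h]
  apply Finset.sum_congr rfl
  intro v hv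
  rw [Finset.mem_piAntidiag] at hv
  have hspec := Nat.multinomial_spec (univ : Finset (Fin m)) v
  rw [hv.1] at hspec
  have hne : (∏ i, ((v i).factorial : ℝ)) ≠ 0 := by positivity
  have hcast : (∏ i, ((v i).factorial : ℝ)) * (Nat.multinomial univ v : ℝ)
      = (k.factorial : ℝ) := by
    exact_mod_cast congrArg (Nat.cast : ℕ → ℝ) hspec
  unfold mult
  rw [Finset.prod_div_distrib]
  field_simp
  rw [← hcast]
  ring

/-- One side of the detailed-balance identity in a normal form. -/
lemma side_eq {m : ℕ} (n : ℕ) (p : Fin m → ℝ) (y : Fin m → ℕ)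
    (Q : Fin m → Fin m → ℝ) (W : Fin m → Fin m → ℕ) :
    mult n p y * ∏ i, ((y i).factorial : ℝ) * ∏ j, Q i j ^ W i j / ((W i j).factorial : ℝ)
      = (n.factorial : ℝ) * (∏ i, p i ^ y i) *
          ∏ i, ∏ j, Q i j ^ W i j / ((W i j).factorial : ℝ) := by
  unfold mult
  rw [Finset.prod_div_distrib, Finset.prod_mul_distrib]
  have h : (∏ i, ((y i).factorial : ℝ)) ≠ 0 := by positivity
  field_simp

/-- Time reversal: with `L⁽ⁱʲ⁾ = π⁽ʲ⁾K⁽ʲⁱ⁾/(Kᵀπ)⁽ⁱ⁾`, the matrix `L` is row-stochastic and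
`Mult(n,π)(x)·M(x,K,x') = Mult(n,Kᵀπ)(x')·M(x',L,x)`; consequently the normalized function
`x ↦ Mult(n,π)(x)M(x,K,x') / ∑_z Mult(n,π)(z)M(z,K,x')` is the pmf `M(x',L,·)` of the
column sums of a random matrix with independent rows, row `i` distributed
`Mult(x'⁽ⁱ⁾, L⁽ⁱ'⁾)`. -/
theorem statement8 (m n : ℕ) (hm : 0 < m) (hn : 0 < n)
    (π : Fin m → ℝ) (hπ0 : ∀ i, 0 ≤ π i) (hπ1 : ∑ i, π i = 1)
    (K : Fin m → Fin m → ℝ) (hK0 : ∀ i j, 0 ≤ K i j) (hK1 : ∀ i, ∑ j, K i j = 1)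
    (hpos : ∀ i, 0 < ∑ j, π j * K j i)
    (x' : Fin m → ℕ) (hx' : ∑ i, x' i = n) :
    (∀ i j, 0 ≤ π j * K j i / (∑ k, π k * K k i)) ∧
    (∀ i, ∑ j, π j * K j i / (∑ k, π k * K k i) = 1) ∧
    (∀ x : Fin m → ℕ, ∑ i, x i = n →
      mult n π x * kerM K x x'
        = mult n (fun i => ∑ j, π j * K j i) x' *
            kerM (fun i j => π j * K j i / (∑ k, π k * K k i)) x' x) ∧
    (∀ x : Fin m → ℕ, ∑ i, x i = n →
      mult n π x * kerM K x x' / (∑ z ∈ vecSet m n, mult n π z * kerM K z x')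
        = kerM (fun i j => π j * K j i / (∑ k, π k * K k i)) x' x) := by
  set c : Fin m → ℝ := fun i => ∑ j, π j * K j i with hc
  set L : Fin m → Fin m → ℝ := fun i j => π j * K j i / c i with hL
  have hc0 : ∀ i, c i ≠ 0 := fun i => ne_of_gt (hpos i)
  have hL1 : ∀ i, ∑ j, L i j = 1 := by
    intro i
    simp only [hL, ← Finset.sum_div]
    exact div_self (hc0 i)
  -- Part 3: detailed balance
  have part3 : ∀ x : Fin m → ℕ, ∑ i, x i = n →
      mult n π x * kerM K x x' = mult n c x' * kerM L x' x := by
    intro x hx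
    unfold kerM
    rw [Finset.mul_sum, Finset.mul_sum]
    apply Finset.sum_nbij' (fun Z => fun a b => Z b a) (fun Z => fun a b => Z b a)
    · intro Z hZ
      rw [mem_transSet_iff] at hZ ⊢
      exact ⟨fun i => hZ.2 i, fun j => hZ.1 j⟩
    · intro Z hZ
      rw [mem_transSet_iff] at hZ ⊢
      exact ⟨fun i => hZ.2 i, fun j => hZ.1 j⟩
    · intro Z _; rfl
    · intro Z _; rfl
    · intro Z hZ
      rw [mem_transSet_iff] at hZ
      obtain ⟨hrow, hcol⟩ := hZ
      rw [side_eq, side_eq]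
      have hB : ∏ i, ∏ j, L i j ^ Z j i / ((Z j i).factorial : ℝ)
          = (∏ j, π j ^ x j) * (∏ i, ∏ j, K i j ^ Z i j / ((Z i j).factorial : ℝ)) *
              ∏ i, (c i ^ x' i)⁻¹ := by
        have step : ∀ i j, L i j ^ Z j i / ((Z j i).factorial : ℝ)
            = π j ^ Z j i * (K j i ^ Z j i / ((Z j i).factorial : ℝ)) * (c i ^ Z j i)⁻¹ := by
          intro i j
          simp only [hL, div_pow, mul_pow]
          ring
        calc ∏ i, ∏ j, L i j ^ Z j i / ((Z j i).factorial : ℝ)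
            = ∏ i, ∏ j, π j ^ Z j i * (K j i ^ Z j i / ((Z j i).factorial : ℝ)) *
                (c i ^ Z j i)⁻¹ := by
              exact Finset.prod_congr rfl fun i _ => Finset.prod_congr rfl fun j _ => step i j
          _ = (∏ i, ∏ j, π j ^ Z j i) *
                (∏ i, ∏ j, K j i ^ Z j i / ((Z j i).factorial : ℝ)) *
                ∏ i, ∏ j, (c i ^ Z j i)⁻¹ := by
              simp only [Finset.prod_mul_distrib]
          _ = (∏ j, π j ^ x j) * (∏ i, ∏ j, K i j ^ Z i j / ((Z i j).factorial : ℝ)) *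
                ∏ i, (c i ^ x' i)⁻¹ := by
              congr 1
              · congr 1
                · rw [Finset.prod_comm]
                  exact Finset.prod_congr rfl fun j _ => by
                    rw [Finset.prod_pow_eq_pow_sum, hrow j]
                · rw [Finset.prod_comm]
              · refine Finset.prod_congr rfl fun i _ => ?_
                rw [Finset.prod_inv_distrib, Finset.prod_pow_eq_pow_sum, hcol i]
      rw [hB]
      have hcancel : (∏ i, c i ^ x' i) * ∏ i, (c i ^ x' i)⁻¹ = 1 := by
        rw [← Finset.prod_mul_distrib]
        refine Finset.prod_eq_one fun i _ => mul_inv_cancel₀ (pow_ne_zero _ (hc0 i))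
      calc (n.factorial : ℝ) * (∏ i, π i ^ x i) *
            ∏ i, ∏ j, K i j ^ Z i j / ((Z i j).factorial : ℝ)
          = (n.factorial : ℝ) * ((∏ i, c i ^ x' i) * ∏ i, (c i ^ x' i)⁻¹) *
              ((∏ j, π j ^ x j) * ∏ i, ∏ j, K i j ^ Z i j / ((Z i j).factorial : ℝ)) := by
            rw [hcancel]; ring
        _ = (n.factorial : ℝ) * (∏ i, c i ^ x' i) *
              ((∏ j, π j ^ x j) * (∏ i, ∏ j, K i j ^ Z i j / ((Z i j).factorial : ℝ)) *
                ∏ i, (c i ^ x' i)⁻¹) := by ring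
  -- Normalization: ∑ over z of kerM L x' z = 1
  have hnorm : ∑ z ∈ vecSet m n, kerM L x' z = 1 := by
    have hker : ∀ z, kerM L x' z = ∑ Z ∈ transSet x' z, ∏ i, mult (x' i) (L i) (Z i) := by
      intro z; rfl
    simp only [hker]
    have hsplit : ∀ z : Fin m → ℕ, transSet x' z =
        (Fintype.piFinset fun i => vecSet m (x' i)).filter
          (fun Z => (fun j => ∑ i, Z i j) = z) := by
      intro z
      ext Z
      rw [mem_transSet_iff, Finset.mem_filter, Fintype.mem_piFinset]
      simp only [mem_vecSet_iff]
      constructor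
      · rintro ⟨h1, h2⟩
        exact ⟨h1, funext h2⟩
      · rintro ⟨h1, h2⟩
        exact ⟨h1, fun j => congrFun h2 j⟩
    simp only [hsplit]
    rw [Finset.sum_fiberwise_of_maps_to]
    · rw [← Finset.prod_univ_sum]
      refine Finset.prod_eq_one fun i _ => mult_sum_one (x' i) (L i) (hL1 i)
    · intro Z hZ
      rw [Fintype.mem_piFinset] at hZ
      simp only [mem_vecSet_iff] at hZ
      rw [mem_vecSet_iff, Finset.sum_comm]
      rw [← hx']
      exact Finset.sum_congr rfl fun i _ => hZ i
  have hmultc : mult n c x' ≠ 0 := by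
    have : 0 < mult n c x' := by
      unfold mult
      have h1 : 0 < (n.factorial : ℝ) := by positivity
      refine mul_pos h1 (Finset.prod_pos fun i _ => div_pos (pow_pos (hpos i) _) ?_)
      positivity
    exact ne_of_gt this
  refine ⟨?_, ?_, part3, ?_⟩
  · intro i j
    exact div_nonneg (mul_nonneg (hπ0 j) (hK0 j i)) (le_of_lt (hpos i))
  · intro i
    rw [← Finset.sum_div]
    exact div_self (hc0 i)
  · intro x hx
    have hden : ∑ z ∈ vecSet m n, mult n π z * kerM K z x' = mult n c x' := by
      have : ∀ z ∈ vecSet m n, mult n π z * kerM K z x' = mult n c x' * kerM L x' z := by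
        intro z hz
        exact part3 z (mem_vecSet_iff.mp hz)
      rw [Finset.sum_congr rfl this, ← Finset.mul_sum, hnorm, mul_one]
    rw [hden, part3 x hx, mul_div_cancel_left₀ _ hmultc]
end

section
/- Let m, n be positive integers, and let P, P' be m×m matrices with nonnegative entries, each with entries summing to 1; suppose the column sums π^{(j)} = ∑_i P^{(i,j)} are all positive. Define the backward kernel B(Z', Z) = 𝟙[1ᵀZ = (Z'·1)ᵀ] · ∏_{j=1}^m ( (Z'·1)^{(j)}! ∏_{i=1}^m (P^{(i,j)}/π^{(j)})^{Z^{(i,j)}} / Z^{(i,j)}! ) for m×m nonnegative-integer matrices Z, Z'. Then for every m×m nonnegative-integer matrix Z with total sum n: ∑_{Z'} Mult(n,P')(Z') · B(Z', Z) = Mult(n, P'')(Z), the sum being over all m×m nonnegative-integer matrices Z' with total sum n, where P''^{(i,j)} = (∑_{k=1}^m P'^{(j,k)}) · P^{(i,j)} / π^{(j)} (so the mixing probability matrix P'' has entries given by the j-th row sum of P' times P^{(i,j)}/π^{(j)}). -/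
open Finset

/-- The backward kernel `B(Z', Z)`: zero unless the column sums of `Z` equal the row sums
of `Z'`, in which case the columns of `Z` are independent with column `j` distributed
`Mult((Z'·1)⁽ʲ⁾, P⁽'ʲ⁾/π⁽ʲ⁾)`, where `π` is the column-sum vector of `P`. -/
noncomputable def backB {m : ℕ} (P : Fin m → Fin m → ℝ) (Z' Z : Fin m → Fin m → ℕ) : ℝ :=
  if ∀ j, ∑ i, Z i j = ∑ k, Z' j k then
    ∏ j, (Nat.factorial (∑ k, Z' j k) : ℝ) *
      ∏ i, (P i j / ∑ k, P k j) ^ Z i j / (Nat.factorial (Z i j) : ℝ)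
  else 0

lemma rowSum (m c : ℕ) (x : Fin m → ℝ) :
    ∑ v ∈ Finset.piAntidiag Finset.univ c, ∏ k, x k ^ v k / (Nat.factorial (v k) : ℝ)
      = (∑ k, x k) ^ c / (Nat.factorial c : ℝ) := by
  rw [Finset.sum_pow_eq_sum_piAntidiag]
  rw [Finset.sum_div]
  refine Finset.sum_congr rfl fun v hv => ?_
  simp only [mem_piAntidiag] at hv
  have hspec := Nat.multinomial_spec Finset.univ v
  rw [hv.1] at hspec
  have : (∏ k, (Nat.factorial (v k) : ℝ)) * (Nat.multinomial Finset.univ v : ℝ)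
      = (Nat.factorial c : ℝ) := by exact_mod_cast congrArg (Nat.cast (R := ℝ)) hspec
  rw [Finset.prod_div_distrib]
  field_simp
  rw [← this]; ring


/-- Mixing the backward kernel `B` over `Mult(n, P')` yields `Mult(n, P'')`, where
`P''⁽ⁱʲ⁾ = (∑ₖ P'⁽ʲᵏ⁾)·P⁽ⁱʲ⁾/π⁽ʲ⁾` and `π` is the column-sum vector of `P`. -/
theorem statement11 (m n : ℕ) (hm : 0 < m) (hn : 0 < n)
    (P : Fin m → Fin m → ℝ) (hP0 : ∀ i j, 0 ≤ P i j) (hP1 : ∑ i, ∑ j, P i j = 1)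
    (hcol : ∀ j, 0 < ∑ i, P i j)
    (P' : Fin m → Fin m → ℝ) (hP'0 : ∀ i j, 0 ≤ P' i j) (hP'1 : ∑ i, ∑ j, P' i j = 1)
    (Z : Fin m → Fin m → ℕ) (hZ : ∑ i, ∑ j, Z i j = n) :
    ∑ Z' ∈ matSet m n, matMult n P' Z' * backB P Z' Z
      = matMult n (fun i j => (∑ k, P' j k) * P i j / (∑ k, P k j)) Z := by
  classical
  set c : Fin m → ℕ := fun j => ∑ i, Z i j with hc
  have hcsum : ∑ j, c j = n := by rw [hc, Finset.sum_comm]; exact hZ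
  set K : ℝ := ∏ j, (Nat.factorial (c j) : ℝ) *
      ∏ i, (P i j / ∑ k, P k j) ^ Z i j / (Nat.factorial (Z i j) : ℝ) with hK
  set T : Finset (Fin m → Fin m → ℕ) :=
    (matSet m n).filter (fun Z' => ∀ j, ∑ i, Z i j = ∑ k, Z' j k) with hT
  have h1 : ∑ Z' ∈ matSet m n, matMult n P' Z' * backB P Z' Z
      = ∑ Z' ∈ T, matMult n P' Z' * K := by
    rw [hT, Finset.sum_filter]
    refine Finset.sum_congr rfl fun Z' _ => ?_
    unfold backB
    by_cases h : ∀ j, ∑ i, Z i j = ∑ k, Z' j k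
    · rw [if_pos h, if_pos h]
      congr 1
      refine Finset.prod_congr rfl fun j _ => ?_
      rw [← h j]
    · rw [if_neg h, if_neg h, mul_zero]
  have h2 : T = Fintype.piFinset (fun j => Finset.piAntidiag Finset.univ (c j)) := by
    ext Z'
    simp only [hT, matSet, Finset.mem_filter, Fintype.mem_piFinset, Finset.mem_range,
      Finset.mem_piAntidiag, Finset.mem_univ, implies_true, and_true]
    constructor
    · rintro ⟨⟨-, -⟩, h⟩ j
      exact (h j).symm
    · intro h
      have hle : ∀ j k, Z' j k ≤ n := by
        intro j k
        calc Z' j k ≤ ∑ l, Z' j l := Finset.single_le_sum (fun _ _ => Nat.zero_le _)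
              (Finset.mem_univ k)
          _ = c j := h j
          _ ≤ ∑ l, c l := Finset.single_le_sum (fun _ _ => Nat.zero_le _) (Finset.mem_univ j)
          _ = n := hcsum
      refine ⟨⟨fun j k => Nat.lt_succ_of_le (hle j k), ?_⟩, fun j => (h j).symm⟩
      rw [← hcsum]
      exact Finset.sum_congr rfl fun j _ => h j
  have h3 : ∑ Z' ∈ T, matMult n P' Z'
      = (Nat.factorial n : ℝ) * ∏ j, (∑ k, P' j k) ^ c j / (Nat.factorial (c j) : ℝ) := by
    rw [h2]
    unfold matMult
    rw [← Finset.mul_sum]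
    congr 1
    rw [← Finset.prod_univ_sum (fun j => Finset.piAntidiag Finset.univ (c j))
      (fun i v => ∏ j, P' i j ^ v j / (Nat.factorial (v j) : ℝ))]
    exact Finset.prod_congr rfl fun j _ => rowSum m (c j) (P' j)
  rw [h1, ← Finset.sum_mul, h3]
  unfold matMult
  rw [Finset.prod_comm]
  rw [mul_assoc, hK, ← Finset.prod_mul_distrib]
  congr 1
  refine Finset.prod_congr rfl fun j _ => ?_
  have hfac : (Nat.factorial (c j) : ℝ) ≠ 0 := Nat.cast_ne_zero.mpr (Nat.factorial_ne_zero _)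
  rw [div_mul_eq_mul_div, mul_comm ((Nat.factorial (c j) : ℝ)), mul_div_assoc, mul_div_assoc,
    div_self hfac, mul_one]
  have : ((∑ k, P' j k) : ℝ) ^ c j = ∏ i, (∑ k, P' j k) ^ Z i j := by
    rw [Finset.prod_pow_eq_pow_sum]
  rw [this, ← Finset.prod_mul_distrib]
  refine Finset.prod_congr rfl fun i _ => ?_
  beta_reduce
  rw [mul_div_assoc, mul_pow, mul_div_assoc]
end
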